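/- An odd indefinite unimodular symmetric bilinear form on ℤ² is diagonalizable with diagonal entries (+1, -1). -/

import Mathlib

/-!
In the basis `e₀, e₁` the Gram matrix is `!![a, b; b, c]`. If `a * c - b ^ 2 = 1`, the identity
`a * B(v, v) = (a x + b y) ^ 2 + y ^ 2` gives `B(v, v)` a constant sign, so indefiniteness forces
`b ^ 2 - a * c = 1`; oddness of `B(v, v) ≡ a x ^ 2 + c y ^ 2 (mod 2)` makes `a` or `c` odd.
With `a` odd, descend on `|a|`: a shear replaces `b` by an even `b'` with `|b'| < |a|`, and then
`a * c' = b' ^ 2 - 1` makes the new corner `c'` odd with `|c'| < |a|`; a swap moves it to the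
corner. At `a = ±1` a single shear reaches `diag(a, -a)`.
-/

open Matrix

namespace Matrix

variable {n R : Type*} [Fintype n] [DecidableEq n] [CommRing R]

def Congruent (G H : Matrix n n R) : Prop :=
  ∃ P : Matrix n n R, IsUnit P.det ∧ Pᵀ * G * P = H

theorem Congruent.trans {G H K : Matrix n n R} (hGH : G.Congruent H) (hHK : H.Congruent K) :
    G.Congruent K := by
  obtain ⟨P, hP, rfl⟩ := hGH
  obtain ⟨Q, hQ, rfl⟩ := hHK
  exact ⟨P * Q, by simpa only [det_mul] using hP.mul hQ,
    by simp only [transpose_mul, Matrix.mul_assoc]⟩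

theorem congruent_shear {a b c b' c' : R} (t : R) (hb : b' = b + a * t)
    (hc : c' = c + 2 * b * t + a * t ^ 2) : !![a, b; b, c].Congruent !![a, b'; b', c'] := by
  refine ⟨!![1, t; 0, 1], by simp [det_fin_two], ?_⟩
  subst hb hc
  ext i j
  fin_cases i <;> fin_cases j <;>
    simp only [Fin.zero_eta, Fin.mk_one, Fin.isValue, mul_apply, transpose_apply, of_apply,
      cons_val', cons_val_zero, cons_val_one, cons_val_fin_one, Fin.sum_univ_two] <;> ring

theorem congruent_swap (a b c : R) : !![a, b; b, c].Congruent !![c, b; b, a] := by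
  refine ⟨!![0, 1; 1, 0], by simp [det_fin_two], ?_⟩
  ext i j
  fin_cases i <;> fin_cases j <;>
    simp only [Fin.zero_eta, Fin.mk_one, Fin.isValue, mul_apply, transpose_apply, of_apply,
      cons_val', cons_val_zero, cons_val_one, cons_val_fin_one, Fin.sum_univ_two] <;> ring

end Matrix

theorem LinearMap.BilinForm.exists_linearEquiv_apply_eq_of_congruent {n R : Type*} [Fintype n]
    [DecidableEq n] [CommRing R] (B : LinearMap.BilinForm R (n → R)) {H : Matrix n n R}
    (h : (LinearMap.toMatrix₂' R B).Congruent H) :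
    ∃ f : (n → R) ≃ₗ[R] (n → R), ∀ x y, B (f x) (f y) = x ⬝ᵥ H *ᵥ y := by
  obtain ⟨P, hP, rfl⟩ := h
  have hB : B.compl₁₂ (toLin' P) (toLin' P) = toLinearMap₂' R (Pᵀ * toMatrix₂' R B * P) := by
    apply (LinearMap.toMatrix₂' R).injective
    simp
  refine ⟨P.toLinearEquiv' (P.invertibleOfIsUnitDet hP), fun x y => ?_⟩
  rw [← Matrix.toLinearMap₂'_apply', ← hB]
  rfl

theorem LinearMap.BilinForm.apply_self_eq_of_toMatrix₂'_eq {R : Type*} [CommRing R]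
    (B : LinearMap.BilinForm R (Fin 2 → R)) {a b c : R}
    (hG : LinearMap.toMatrix₂' R B = !![a, b; b, c]) (x : Fin 2 → R) :
    B x x = a * x 0 ^ 2 + 2 * b * x 0 * x 1 + c * x 1 ^ 2 := by
  rw [← Matrix.toLinearMap₂'_toMatrix' (R := R) B, hG, Matrix.toLinearMap₂'_apply']
  simp only [dotProduct, mulVec, of_apply, cons_val', cons_val_fin_one, Fin.sum_univ_two,
    Fin.isValue, cons_val_zero, cons_val_one]
  ring

namespace Int

theorem sq_sub_mul_eq_one_of_indefinite {a b c x y u v : ℤ}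
    (hdet : a * c - b ^ 2 = 1 ∨ a * c - b ^ 2 = -1)
    (hpos : 0 < a * x ^ 2 + 2 * b * x * y + c * y ^ 2)
    (hneg : a * u ^ 2 + 2 * b * u * v + c * v ^ 2 < 0) : b ^ 2 - a * c = 1 := by
  rcases hdet with hdet | hdet
  · have hdef : ∀ x y, 0 ≤ a * (a * x ^ 2 + 2 * b * x * y + c * y ^ 2) := fun x y => by
      nlinarith [sq_nonneg (a * x + b * y), sq_nonneg y]
    have ha : a = 0 := le_antisymm (nonpos_of_mul_nonneg_left (hdef u v) hneg)
      (nonneg_of_mul_nonneg_left (hdef x y) hpos)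
    subst ha
    nlinarith [sq_nonneg b]
  · linarith

theorem odd_or_odd_of_odd_binaryForm {a b c x y : ℤ}
    (h : Odd (a * x ^ 2 + 2 * b * x * y + c * y ^ 2)) : Odd a ∨ Odd c := by
  contrapose! h
  simp only [Int.not_odd_iff_even] at h ⊢
  have hmid : Even (2 * b * x * y) := by
    rw [mul_assoc, mul_assoc]
    exact even_two_mul _
  exact ((h.1.mul_right _).add hmid).add (h.2.mul_right _)

theorem exists_even_abs_lt_dvd_sub {a : ℤ} (ha : Odd a) (b : ℤ) :
    ∃ b', Even b' ∧ |b'| < |a| ∧ a ∣ b' - b := by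
  have ha0 : a ≠ 0 := by rintro rfl; simp at ha
  have hdvd : a ∣ b % a - b := (Int.mod_modEq b a).symm.dvd
  have hnonneg := Int.emod_nonneg b ha0
  have hlt := Int.emod_lt_abs b ha0
  by_cases he : Even (b % a)
  · exact ⟨b % a, he, by rwa [abs_of_nonneg hnonneg], hdvd⟩
  · have hpos : 0 < b % a := hnonneg.lt_of_ne (by rintro h; simp [← h] at he)
    refine ⟨b % a - |a|, (Int.not_even_iff_odd.mp he).sub_odd (odd_abs.mpr ha), ?_, ?_⟩
    · rw [abs_lt]
      constructor <;> linarith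
    · simpa only [sub_right_comm] using hdvd.sub (self_dvd_abs a)

theorem abs_lt_of_mul_eq_sq_sub_one {a b c : ℤ} (ha : 1 < |a|) (hb : |b| < |a|)
    (h : a * c = b ^ 2 - 1) : |c| < |a| := by
  have : |a| * |c| < |a| * |a| := by
    rw [← abs_mul, h, abs_lt]
    constructor <;> nlinarith [sq_abs b, sq_abs a, abs_nonneg b]
  exact lt_of_mul_lt_mul_left this (abs_nonneg a)

end Int

theorem Matrix.congruent_diag_one_neg_one_of_odd {a : ℤ} (b c : ℤ) (ha : Odd a)
    (hdisc : b ^ 2 - a * c = 1) : !![a, b; b, c].Congruent !![1, 0; 0, -1] := by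
  rcases le_or_gt |a| 1 with ha1 | ha1
  · obtain rfl | rfl : a = 1 ∨ a = -1 := by
      obtain ⟨k, rfl⟩ := ha
      rw [abs_le] at ha1
      omega
    · exact congruent_shear (-b) (by ring) (by linear_combination hdisc)
    · exact (congruent_shear b (by ring) (by linear_combination -hdisc)).trans
        (congruent_swap (-1) 0 1)
  · obtain ⟨b', hb'even, hb'lt, t, ht⟩ := Int.exists_even_abs_lt_dvd_sub ha b
    set c' := c + 2 * b * t + a * t ^ 2
    have hc' : a * c' = b' ^ 2 - 1 := by linear_combination -hdisc - (b' + b + a * t) * ht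
    have hc'odd : Odd c' := by
      have : Odd (a * c') := hc' ▸ (hb'even.pow_of_ne_zero two_ne_zero).sub_odd odd_one
      exact (Int.odd_mul.mp this).2
    have hlt : |c'| < |a| := Int.abs_lt_of_mul_eq_sq_sub_one ha1 hb'lt hc'
    exact (congruent_shear t (by linarith) rfl).trans <| (congruent_swap a b' c').trans <|
      congruent_diag_one_neg_one_of_odd b' a hc'odd (by linear_combination -hc')
termination_by a.natAbs
decreasing_by rw [← Int.ofNat_lt, Int.natCast_natAbs, Int.natCast_natAbs]; exact hlt

/-- An odd indefinite unimodular symmetric bilinear form on `ℤ²` is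
diagonalizable with diagonal entries `(+1, -1)`. -/
theorem odd_indefinite_unimodular_rank_two_diagonalizable
    (B : LinearMap.BilinForm ℤ (Fin 2 → ℤ))
    (hsymm : ∀ x y, B x y = B y x)
    (hunimod : (Matrix.of fun i j => B (Pi.single i 1) (Pi.single j 1)).det = 1 ∨
               (Matrix.of fun i j => B (Pi.single i 1) (Pi.single j 1)).det = -1)
    (hodd : ∃ x, Odd (B x x))
    (hindef : (∃ x, 0 < B x x) ∧ (∃ y, B y y < 0)) :
    ∃ f : (Fin 2 → ℤ) ≃ₗ[ℤ] (Fin 2 → ℤ),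
      ∀ x y, B (f x) (f y) = x 0 * y 0 - x 1 * y 1 := by
  set a := B (Pi.single 0 1) (Pi.single 0 1)
  set b := B (Pi.single 0 1) (Pi.single 1 1)
  set c := B (Pi.single 1 1) (Pi.single 1 1)
  have hG : LinearMap.toMatrix₂' ℤ B = !![a, b; b, c] := by
    rw [eta_fin_two (LinearMap.toMatrix₂' ℤ B)]
    simp [a, b, c, hsymm (Pi.single 1 1)]
  have hQ := B.apply_self_eq_of_toMatrix₂'_eq hG
  have hdet : a * c - b ^ 2 = 1 ∨ a * c - b ^ 2 = -1 := by
    have hgram : (Matrix.of fun i j => B (Pi.single i 1) (Pi.single j 1)) =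
        LinearMap.toMatrix₂' ℤ B := rfl
    rwa [hgram, hG, det_fin_two_of, ← sq] at hunimod
  obtain ⟨⟨x, hx⟩, u, hu⟩ := hindef
  have hdisc := Int.sq_sub_mul_eq_one_of_indefinite hdet (hQ x ▸ hx) (hQ u ▸ hu)
  obtain ⟨z, hz⟩ := hodd
  have hdiag : !![a, b; b, c].Congruent !![1, 0; 0, -1] := by
    rcases Int.odd_or_odd_of_odd_binaryForm (hQ z ▸ hz) with ha | hc
    · exact congruent_diag_one_neg_one_of_odd b c ha hdisc
    · exact (congruent_swap a b c).trans
        (congruent_diag_one_neg_one_of_odd b a hc (by linear_combination hdisc))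
  obtain ⟨f, hf⟩ := B.exists_linearEquiv_apply_eq_of_congruent (hG ▸ hdiag)
  refine ⟨f, fun x y => ?_⟩
  simp [hf, dotProduct, mulVec, Fin.sum_univ_two, sub_eq_add_neg]
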